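/- Let $X \sim \mathrm{Beta}(\alpha,\beta)$ with $\alpha,\beta \ge 1$ and $p = \alpha/(\alpha+\beta)$. Then for any $\varepsilon \in (0, p)$, $\Pr(X \le p - \varepsilon) \le \exp(-2(\alpha+\beta-1)\varepsilon^2)$. -/

import Mathlib

open MeasureTheory Real

/-- The density of the Beta distribution with parameters `a`, `b` on `(0,1)`. -/
noncomputable def betaPDFReal (a b x : ℝ) : ℝ :=
  if x ∈ Set.Ioo (0 : ℝ) 1 then
    (Real.Gamma (a + b) / (Real.Gamma a * Real.Gamma b)) * x ^ (a - 1) * (1 - x) ^ (b - 1)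
  else 0

/-- The Beta distribution with parameters `a`, `b`. -/
noncomputable def betaMeasure (a b : ℝ) : Measure ℝ :=
  volume.withDensity (fun x => ENNReal.ofReal (betaPDFReal a b x))

/-
Put `c = p - ε` and `t = p / c > 1`. For `x ≤ c` the dilation `x ↦ t x` multiplies the Beta
density, Jacobian included, by at least `t ^ a * ((1 - p) / (1 - c)) ^ (b - 1)`, because
`1 - t x ≥ (1 - p) / (1 - c) * (1 - x)` on `[0, c]`. As it maps `(-∞, c]` onto `(-∞, p]`,
this gives `P(X ≤ c) * t ^ a * ((1 - p) / (1 - c)) ^ (b - 1) ≤ P(X ≤ p) ≤ 1`. Finally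
`a log (p / (p - ε)) + (b - 1) log ((1 - p) / (1 - p + ε)) - 2 (a + b - 1) ε²` vanishes at
`ε = 0` and has derivative at least `4p ≥ 0`, by `p (a + b) = a` and
`(p - ε) (1 - p + ε) ≤ 1/4`.
-/

open Set
open scoped ENNReal

lemma four_mul_le_div_sub_div {a b p x : ℝ} (hp : p * (a + b) = a) (hab : 1 ≤ a + b)
    (hx : 0 ≤ x) (hxp : x < p) (hp1 : p < 1) :
    4 * (a + b - 1) * x ≤ a / (p - x) - (b - 1) / (1 - p + x) := by
  have hu : 0 < p - x := by linarith
  have hv : 0 < 1 - p + x := by linarith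
  have hsplit : a / (p - x) - (b - 1) / (1 - p + x)
      = (p + (a + b - 1) * x) / ((p - x) * (1 - p + x)) := by
    field_simp
    linear_combination -hp
  have hprod : (p - x) * (1 - p + x) ≤ 1 / 4 := by nlinarith [sq_nonneg (2 * (p - x) - 1)]
  have hx' : 0 ≤ (a + b - 1) * x := by nlinarith
  rw [hsplit, le_div_iff₀ (by positivity)]
  nlinarith [mul_le_mul_of_nonneg_left hprod hx']

lemma two_mul_sq_le_weighted_log_ratio {a b p ε : ℝ} (hp : p * (a + b) = a) (hab : 1 ≤ a + b)
    (hε : 0 ≤ ε) (hεp : ε < p) (hp1 : p < 1) :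
    2 * (a + b - 1) * ε ^ 2 ≤
      a * (log p - log (p - ε)) + (b - 1) * (log (1 - p) - log (1 - p + ε)) := by
  let φ : ℝ → ℝ := fun x =>
    a * (log p - log (p - x)) + (b - 1) * (log (1 - p) - log (1 - p + x)) - 2 * (a + b - 1) * x ^ 2
  have hφ' : ∀ x ∈ Icc 0 ε, HasDerivAt φ
      (a / (p - x) - (b - 1) / (1 - p + x) - 4 * (a + b - 1) * x) x := by
    intro x hx
    have hu : p - x ≠ 0 := by linarith [hx.2]
    have hv : 1 - p + x ≠ 0 := by linarith [hx.1]
    have := ((((hasDerivAt_id x).const_sub p).log hu).const_sub (log p) |>.const_mul a).add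
      ((((hasDerivAt_id x).const_add (1 - p)).log hv).const_sub (log (1 - p)) |>.const_mul (b - 1))
      |>.sub ((hasDerivAt_pow 2 x).const_mul (2 * (a + b - 1)))
    refine this.congr_deriv ?_
    simp only [id]
    ring
  have hmono : MonotoneOn φ (Icc 0 ε) := by
    refine monotoneOn_of_hasDerivWithinAt_nonneg (convex_Icc 0 ε)
      (fun x hx => (hφ' x hx).continuousAt.continuousWithinAt)
      (fun x hx => (hφ' x (interior_subset hx)).hasDerivWithinAt) fun x hx => ?_
    rw [interior_Icc] at hx
    linarith [four_mul_le_div_sub_div hp hab hx.1.le (hx.2.trans hεp) hp1]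
  have := hmono (left_mem_Icc.2 hε) (right_mem_Icc.2 hε) hε
  simp only [φ, sub_zero, add_zero, sub_self, mul_zero] at this
  linarith

lemma exp_two_mul_sq_le_rpow_mul_rpow {a b p ε : ℝ} (hp : p * (a + b) = a) (hab : 1 ≤ a + b)
    (hε : 0 ≤ ε) (hεp : ε < p) (hp1 : p < 1) :
    exp (2 * (a + b - 1) * ε ^ 2) ≤
      (p / (p - ε)) ^ a * ((1 - p) / (1 - p + ε)) ^ (b - 1) := by
  have hpε : 0 < p - ε := by linarith
  have hq : 0 < 1 - p := by linarith
  rw [rpow_def_of_pos (div_pos (by linarith : 0 < p) hpε),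
    rpow_def_of_pos (div_pos hq (by linarith : 0 < 1 - p + ε)), ← exp_add, exp_le_exp,
    log_div (by linarith) hpε.ne', log_div hq.ne' (by linarith)]
  linarith [two_mul_sq_le_weighted_log_ratio hp hab hε hεp hp1]

lemma withDensity_Iic_le_of_le_dilation {f : ℝ → ℝ≥0∞} {K : ℝ≥0∞} {c t : ℝ}
    (hK : K ≠ ⊤) (ht : 0 < t) (hf : ∀ x ≤ c, f x ≤ K * (ENNReal.ofReal t * f (t * x))) :
    volume.withDensity f (Iic c) ≤ K * volume.withDensity f (Iic (t * c)) := by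
  have hdilate :
      ∫⁻ y in Iic (t * c), f y = ∫⁻ x in Iic c, ENNReal.ofReal t * f (t * x) := by
    rw [← image_mul_left_Iic ht c, lintegral_image_eq_lintegral_abs_deriv_mul measurableSet_Iic
      (fun x _ => (hasDerivAt_const_mul t).hasDerivWithinAt) (mul_right_injective₀ ht.ne').injOn]
    simp only [abs_of_pos ht]
  rw [withDensity_apply _ measurableSet_Iic, withDensity_apply _ measurableSet_Iic, hdilate,
    ← lintegral_const_mul' _ _ hK]
  exact setLIntegral_mono' measurableSet_Iic hf

namespace ProbabilityTheory

lemma betaPDFReal_nonneg {a b x : ℝ} (ha : 0 < a) (hb : 0 < b) : 0 ≤ betaPDFReal a b x := by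
  by_cases hx : 0 < x ∧ x < 1
  · exact (betaPDFReal_pos hx.1 hx.2 ha hb).le
  · simp [betaPDFReal, hx]

lemma rpow_mul_rpow_mul_betaPDFReal_le {a b c t x : ℝ} (ha : 0 < a) (hb : 1 ≤ b) (ht : 1 ≤ t)
    (htc : t * c < 1) (hx : x ≤ c) :
    t ^ a * ((1 - t * c) / (1 - c)) ^ (b - 1) * betaPDFReal a b x ≤
      t * betaPDFReal a b (t * x) := by
  rcases le_or_gt x 0 with hx0 | hx0
  · have htx : t * x ≤ 0 := mul_nonpos_of_nonneg_of_nonpos (by linarith) hx0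
    simp [betaPDFReal, hx0.not_gt, htx.not_gt]
  have hc1 : c < 1 := by nlinarith
  have htx : t * x < 1 := by nlinarith
  have ht0 : 0 < t := by linarith
  have hlin : (1 - t * c) / (1 - c) * (1 - x) ≤ 1 - t * x := by
    rw [div_mul_eq_mul_div, div_le_iff₀ (by linarith)]
    nlinarith
  have hq : 0 ≤ (1 - t * c) / (1 - c) := div_nonneg (by linarith) (by linarith)
  have hpow : ((1 - t * c) / (1 - c)) ^ (b - 1) * (1 - x) ^ (b - 1) ≤ (1 - t * x) ^ (b - 1) := by
    rw [← mul_rpow hq (by linarith)]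
    exact rpow_le_rpow (mul_nonneg hq (by linarith)) hlin (by linarith)
  have hscale : t * (t * x) ^ (a - 1) = t ^ a * x ^ (a - 1) := by
    rw [mul_rpow ht0.le hx0.le, ← mul_assoc, ← rpow_one_add' ht0.le (by linarith)]
    ring_nf
  rw [betaPDFReal, if_pos ⟨hx0, by linarith⟩, betaPDFReal, if_pos ⟨by positivity, htx⟩]
  have hβ := beta_pos ha (by linarith : 0 < b)
  calc t ^ a * ((1 - t * c) / (1 - c)) ^ (b - 1) * (1 / beta a b * x ^ (a - 1) * (1 - x) ^ (b - 1))
      = 1 / beta a b * x ^ (a - 1) * t ^ a *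
          (((1 - t * c) / (1 - c)) ^ (b - 1) * (1 - x) ^ (b - 1)) := by ring
    _ ≤ 1 / beta a b * x ^ (a - 1) * t ^ a * (1 - t * x) ^ (b - 1) := by gcongr
    _ = t * (1 / beta a b * (t * x) ^ (a - 1) * (1 - t * x) ^ (b - 1)) := by
      linear_combination (-(1 / beta a b * (1 - t * x) ^ (b - 1))) * hscale

lemma betaPDF_le_exp_mul_dilation {a b p ε x : ℝ} (ha : 0 < a) (hb : 1 ≤ b)
    (hp : p * (a + b) = a) (hε : 0 < ε) (hεp : ε < p) (hp1 : p < 1) (hx : x ≤ p - ε) :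
    betaPDF a b x ≤ ENNReal.ofReal (exp (-2 * (a + b - 1) * ε ^ 2)) *
      (ENNReal.ofReal (p / (p - ε)) * betaPDF a b (p / (p - ε) * x)) := by
  set t := p / (p - ε)
  have hpε : 0 < p - ε := by linarith
  have htc : t * (p - ε) = p := div_mul_cancel₀ p hpε.ne'
  have ht : 1 ≤ t := (one_le_div hpε).2 (by linarith)
  have hdilate := rpow_mul_rpow_mul_betaPDFReal_le ha hb ht (by rw [htc]; exact hp1) hx
  rw [htc, show 1 - (p - ε) = 1 - p + ε by ring] at hdilate
  have hexp := exp_two_mul_sq_le_rpow_mul_rpow hp (by linarith) hε.le hεp hp1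
  have hpdf := betaPDFReal_nonneg (x := x) ha (by linarith : 0 < b)
  have hreal : betaPDFReal a b x ≤
      exp (-2 * (a + b - 1) * ε ^ 2) * (t * betaPDFReal a b (t * x)) :=
    calc betaPDFReal a b x
        = exp (-2 * (a + b - 1) * ε ^ 2) *
            (exp (2 * (a + b - 1) * ε ^ 2) * betaPDFReal a b x) := by
          rw [← mul_assoc, ← exp_add, neg_mul, neg_mul, neg_add_cancel, exp_zero, one_mul]
      _ ≤ _ := mul_le_mul_of_nonneg_left
          ((mul_le_mul_of_nonneg_right hexp hpdf).trans hdilate) (exp_pos _).le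
  rw [betaPDF, betaPDF, ← ENNReal.ofReal_mul (by positivity),
    ← ENNReal.ofReal_mul (exp_pos _).le]
  exact ENNReal.ofReal_le_ofReal hreal

end ProbabilityTheory

lemma betaMeasure_eq_probabilityTheory_betaMeasure (a b : ℝ) :
    betaMeasure a b = ProbabilityTheory.betaMeasure a b := by
  have hpdf : betaPDFReal a b = ProbabilityTheory.betaPDFReal a b := by
    ext x
    simp only [betaPDFReal, ProbabilityTheory.betaPDFReal, ProbabilityTheory.beta, one_div_div,
      mem_Ioo]
  rw [betaMeasure, hpdf]
  rfl

/-- Upper tail bound for the Beta distribution (Lemma 1 of the paper, lower tail):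
for `X ~ Beta(a,b)` with `a, b ≥ 1` and `p = a/(a+b)`, for any `ε ∈ (0, p)`,
`Pr(X ≤ p - ε) ≤ exp (-2(a+b-1)ε²)`. -/
theorem beta_lower_tail_bound
    (a b : ℝ) (ha : 1 ≤ a) (hb : 1 ≤ b)
    (p : ℝ) (hp : p = a / (a + b))
    (ε : ℝ) (hε : ε ∈ Set.Ioo 0 p) :
    betaMeasure a b {x | x ≤ p - ε} ≤
      ENNReal.ofReal (Real.exp (-2 * (a + b - 1) * ε ^ 2)) := by
  obtain ⟨hε0, hεp⟩ := hε
  have ha0 : 0 < a := by linarith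
  have hpab : p * (a + b) = a := by rw [hp]; field_simp
  have hp1 : p < 1 := by rw [hp, div_lt_one (by linarith)]; linarith
  have hprob := ProbabilityTheory.isProbabilityMeasureBeta ha0 (by linarith : 0 < b)
  rw [betaMeasure_eq_probabilityTheory_betaMeasure]
  calc ProbabilityTheory.betaMeasure a b (Iic (p - ε))
      ≤ ENNReal.ofReal (exp (-2 * (a + b - 1) * ε ^ 2)) *
          ProbabilityTheory.betaMeasure a b (Iic (p / (p - ε) * (p - ε))) :=
        withDensity_Iic_le_of_le_dilation ENNReal.ofReal_ne_top
          (div_pos (by linarith) (by linarith)) fun x hx =>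
            ProbabilityTheory.betaPDF_le_exp_mul_dilation ha0 hb hpab hε0 hεp hp1 hx
    _ ≤ ENNReal.ofReal (exp (-2 * (a + b - 1) * ε ^ 2)) := mul_le_of_le_one_right' prob_le_one
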